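/- All roots of the polynomial P_n(X) = ∑_{ν=0}^n binom(-1/2,ν)(-X)^ν are simple. -/

import Mathlib

/-!
`P_n` is the degree-`n` truncation of `(1 - X)^(-1/2)`. The coefficients
`c_ν = (-1)^ν binom(-1/2, ν)` satisfy `(ν + 1) c_{ν+1} = (ν + 1/2) c_ν`, which turns the
differential equation `2 (1 - X) f' = f` of `(1 - X)^(-1/2)` into
`2 (1 - X) P_n' = P_n - (2n + 1) c_n X^n` for the truncation. At a multiple root `z` both `P_n`
and `P_n'` vanish, so `z^n = 0`, i.e. `z = 0`; but `P_n(0) = 1`.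
-/

/-- The generalized binomial coefficient `binom (-1/2) ν`. -/
noncomputable def binomHalf (ν : ℕ) : ℂ :=
  ∏ κ ∈ Finset.range ν, ((-1/2 : ℂ) - κ) / ((ν : ℂ) - κ)

open Finset

namespace Polynomial

variable {R : Type*} [CommRing R]

theorem eval_zero_sum_C_mul_X_pow (c : ℕ → R) (n : ℕ) :
    (∑ ν ∈ range (n + 1), C (c ν) * X ^ ν).eval 0 = c 0 := by
  simp [eval_finsetSum, sum_range_succ']

theorem one_sub_X_mul_derivative_sum_C_mul_X_pow (c : ℕ → R) (a : R)
    (hc : ∀ ν : ℕ, ((ν : R) + 1) * c (ν + 1) = (ν - a) * c ν) (n : ℕ) :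
    (1 - X) * derivative (∑ ν ∈ range (n + 1), C (c ν) * X ^ ν) =
      C (-a) * ∑ ν ∈ range (n + 1), C (c ν) * X ^ ν + C ((a - n) * c n) * X ^ n := by
  induction n with
  | zero => simp
  | succ m ih =>
    have hcm : (C ((m : R) + 1) * C (c (m + 1)) : R[X]) = C (m - a) * C (c m) := by
      rw [← C_mul, ← C_mul, hc]
    rw [sum_range_succ, derivative_add, mul_add, ih, derivative_C_mul_X_pow]
    simp only [map_mul, map_sub, map_add, map_neg, map_natCast, map_one, Nat.cast_add,
      Nat.cast_one, add_tsub_cancel_right] at hcm ⊢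
    linear_combination X ^ m * hcm

theorem rootMultiplicity_le_one_of_mul_derivative_eq [IsDomain R] {p A : R[X]} {u v : R} {n : ℕ}
    (h : A * derivative p = C u * p + C v * X ^ n) (hv : v ≠ 0) (h0 : p.eval 0 ≠ 0) (z : R) :
    p.rootMultiplicity z ≤ 1 := by
  have hp : p ≠ 0 := by rintro rfl; simp at h0
  by_contra! hz
  obtain ⟨hpz, hp'z⟩ := (one_lt_rootMultiplicity_iff_isRoot hp).1 hz
  have hvz : v * z ^ n = 0 := by
    simpa [hpz.eq_zero, hp'z.eq_zero] using (congrArg (eval z) h).symm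
  obtain rfl : z = 0 := eq_zero_of_pow_eq_zero ((mul_eq_zero.1 hvz).resolve_left hv)
  exact h0 hpz

end Polynomial

open Polynomial

theorem prod_range_natCast_sub_natCast {R : Type*} [CommRing R] (ν : ℕ) :
    ∏ κ ∈ range ν, ((ν : R) - κ) = ν.factorial := by
  rw [← Nat.descFactorial_self, Nat.descFactorial_eq_prod_range, Nat.cast_prod]
  exact prod_congr rfl fun κ hκ => by rw [Nat.cast_sub (mem_range.1 hκ).le]

theorem neg_half_sub_natCast_ne_zero {K : Type*} [Field K] [CharZero K] (κ : ℕ) :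
    (-1/2 : K) - κ ≠ 0 := by
  have h : (2 * κ + 1 : K) ≠ 0 := by exact_mod_cast (2 * κ).succ_ne_zero
  intro h'
  exact h (by linear_combination -2 * h')

theorem binomHalf_ne_zero (ν : ℕ) : binomHalf ν ≠ 0 :=
  prod_ne_zero_iff.2 fun κ hκ => div_ne_zero (neg_half_sub_natCast_ne_zero κ)
    (sub_ne_zero.2 (by exact_mod_cast (mem_range.1 hκ).ne'))

theorem binomHalf_eq_prod_div_factorial (ν : ℕ) :
    binomHalf ν = (∏ κ ∈ range ν, ((-1/2 : ℂ) - κ)) / ν.factorial := by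
  rw [binomHalf, prod_div_distrib, prod_range_natCast_sub_natCast]

theorem binomHalf_succ (ν : ℕ) :
    ((ν : ℂ) + 1) * binomHalf (ν + 1) = ((-1/2 : ℂ) - ν) * binomHalf ν := by
  have h : (ν.factorial : ℂ) ≠ 0 := by exact_mod_cast ν.factorial_ne_zero
  rw [binomHalf_eq_prod_div_factorial, binomHalf_eq_prod_div_factorial, prod_range_succ,
    Nat.factorial_succ, Nat.cast_mul, Nat.cast_succ]
  field_simp

theorem stmt_8_general (n : ℕ) (z : ℂ) :
    Polynomial.rootMultiplicity z
      (∑ ν ∈ Finset.range (n + 1),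
        Polynomial.C (binomHalf ν) * (-Polynomial.X) ^ ν) ≤ 1 := by
  have hsum : ∑ ν ∈ range (n + 1), C (binomHalf ν) * (-X) ^ ν =
      ∑ ν ∈ range (n + 1), C ((-1) ^ ν * binomHalf ν) * X ^ ν :=
    sum_congr rfl fun ν _ => by rw [neg_pow, map_mul, map_pow, map_neg, map_one]; ring
  have hc (ν : ℕ) : ((ν : ℂ) + 1) * ((-1) ^ (ν + 1) * binomHalf (ν + 1)) =
      (ν - (-1/2)) * ((-1) ^ ν * binomHalf ν) := by
    linear_combination (-1) ^ (ν + 1) * binomHalf_succ ν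
  rw [hsum]
  refine rootMultiplicity_le_one_of_mul_derivative_eq
    (one_sub_X_mul_derivative_sum_C_mul_X_pow (fun ν => (-1) ^ ν * binomHalf ν) (-1/2) hc n)
    ?_ ?_ z
  · exact mul_ne_zero (neg_half_sub_natCast_ne_zero n)
      (mul_ne_zero (pow_ne_zero n (neg_ne_zero.2 one_ne_zero)) (binomHalf_ne_zero n))
  · rw [eval_zero_sum_C_mul_X_pow]
    simp [binomHalf]

theorem stmt_8 (n : ℕ) (hn : 1 ≤ n) (z : ℂ) :
    Polynomial.rootMultiplicity z
      (∑ ν ∈ Finset.range (n + 1),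
        Polynomial.C (binomHalf ν) * (-Polynomial.X) ^ ν) ≤ 1 :=
  stmt_8_general n z
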